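/- arXiv:1711.10817 — 4 statements merged into one kernel-verified Lean document; each statement's English description precedes it below -/
import Mathlib

section
/- If P = P₁ · P₂ and for every index function η' with nonzero coefficient in P₂ there exists a variable x such that x does not occur in P₁ (is a dummy variable of P₁) and η'(x) ≠ η(x), then the coefficient of x^η in P is zero. -/
namespace MvPolynomial

theorem coeff_mul_eq_zero_of_forall_add_ne {σ R : Type*} [CommSemiring R]
    {p q : MvPolynomial σ R} {n : σ →₀ ℕ}
    (h : ∀ a ∈ p.support, ∀ b ∈ q.support, a + b ≠ n) :
    coeff n (p * q) = 0 := by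
  classical
  rw [← notMem_support_iff]
  intro hn
  obtain ⟨a, ha, b, hb, hab⟩ := Finset.mem_add.mp (support_mul p q hn)
  exact h a ha b hb hab

end MvPolynomial

theorem coeff_mul_eq_zero_of_dummy_general {X R : Type*} [CommRing R]
    (P P₁ P₂ : MvPolynomial X R) (η : X →₀ ℕ)
    (hP : P = P₁ * P₂)
    (h : ∀ η' : X →₀ ℕ, MvPolynomial.coeff η' P₂ ≠ 0 →
      ∃ x : X, (∀ σ : X →₀ ℕ, MvPolynomial.coeff σ P₁ ≠ 0 → σ x = 0) ∧ η' x ≠ η x) :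
    MvPolynomial.coeff η P = 0 := by
  subst hP
  refine MvPolynomial.coeff_mul_eq_zero_of_forall_add_ne fun σ hσ η' hη' hsum => ?_
  obtain ⟨x, hdummy, hx⟩ := h η' (MvPolynomial.mem_support_iff.mp hη')
  have hσx : σ x = 0 := hdummy σ (MvPolynomial.mem_support_iff.mp hσ)
  exact hx (by simpa [hσx] using congrArg (· x) hsum)

/-- If `P = P₁ · P₂` over an integral domain and for every index function `η'` with nonzero
coefficient in `P₂` there is a variable `x` that is a dummy variable of `P₁` (every monomial of
`P₁` with nonzero coefficient has exponent `0` on `x`) with `η'(x) ≠ η(x)`, then the coefficient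
of `x^η` in `P` is zero. -/
theorem coeff_mul_eq_zero_of_dummy {X R : Type*} [Fintype X] [CommRing R] [IsDomain R]
    (P P₁ P₂ : MvPolynomial X R) (η : X →₀ ℕ)
    (hP : P = P₁ * P₂)
    (h : ∀ η' : X →₀ ℕ, MvPolynomial.coeff η' P₂ ≠ 0 →
      ∃ x : X, (∀ σ : X →₀ ℕ, MvPolynomial.coeff σ P₁ ≠ 0 → σ x = 0) ∧ η' x ≠ η x) :
    MvPolynomial.coeff η P = 0 :=
  coeff_mul_eq_zero_of_dummy_general P P₁ P₂ η hP h
end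

section
/- The graph polynomial is multiplicative over edge cuts meeting in at most specified vertices: if G is a graph, e' = xy an edge, and G₁, G₂ are induced subgraphs with V(G₁) ∪ V(G₂) = V(G), V(G₁) ∩ V(G₂) = {x, y}, and E(G) = E(G₁) ∪ E(G₂) with E(G₁) ∩ E(G₂) = {e'}, then P_{G − e'}(x) = P_{G₁ − e'}(x) · P_{G₂ − e'}(x). -/
open MvPolynomial

/-- The graph polynomial `P_G(x) = ∏_{uv ∈ E(G), u < v} (x_v - x_u)` over `ℤ`. -/
noncomputable def graphPoly {V : Type*} [Fintype V] [LinearOrder V] (G : SimpleGraph V) :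
    MvPolynomial V ℤ :=
  open scoped Classical in
  ∏ p ∈ Finset.univ.filter (fun p : V × V => p.1 < p.2 ∧ G.Adj p.1 p.2),
    (X p.2 - X p.1)

/-- The subgraph of `G` induced on the vertex set `A` (viewed as a graph on all of `V`,
with no edges leaving `A`). -/
def SimpleGraph.restrictTo {V : Type*} (G : SimpleGraph V) (A : Set V) : SimpleGraph V where
  Adj u v := G.Adj u v ∧ u ∈ A ∧ v ∈ A
  symm := ⟨by rintro u v ⟨h, ha, hb⟩; exact ⟨h.symm, hb, ha⟩⟩
  loopless := ⟨by rintro v ⟨h, -, -⟩; exact G.irrefl h⟩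
/-! Since `A ∩ B ⊆ {x, y}`, the only edge that `G[A]` and `G[B]` can share is `xy`. Once it is
deleted, the two graphs are edge-disjoint and together cover `G - xy`, so the product defining
`P_{G - xy}` splits into the two products. -/

theorem graphPoly_sup {V : Type*} [Fintype V] [LinearOrder V] {G₁ G₂ : SimpleGraph V}
    (h : Disjoint G₁ G₂) : graphPoly (G₁ ⊔ G₂) = graphPoly G₁ * graphPoly G₂ := by
  classical
  unfold graphPoly
  rw [← Finset.prod_union]
  · congr 1
    ext p
    simp only [Finset.mem_filter, Finset.mem_union, Finset.mem_univ, true_and,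
      SimpleGraph.sup_adj, and_or_left]
  · rw [Finset.disjoint_filter]
    rintro p - ⟨-, h₁⟩ ⟨-, h₂⟩
    exact (h.le_bot : G₁ ⊓ G₂ ≤ ⊥) ⟨h₁, h₂⟩

namespace SimpleGraph

variable {V : Type*} (G : SimpleGraph V) {A B : Set V}

theorem restrictTo_sup_restrictTo
    (h : ∀ u v, G.Adj u v → (u ∈ A ∧ v ∈ A) ∨ (u ∈ B ∧ v ∈ B)) :
    G.restrictTo A ⊔ G.restrictTo B = G := by
  ext u v
  simp only [sup_adj, restrictTo]
  constructor
  · rintro (⟨huv, -⟩ | ⟨huv, -⟩) <;> exact huv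
  · exact fun huv => (h u v huv).imp (⟨huv, ·⟩) (⟨huv, ·⟩)

theorem disjoint_restrictTo_deleteEdges {x y : V} (h : A ∩ B ⊆ {x, y}) :
    Disjoint ((G.restrictTo A).deleteEdges {s(x, y)}) ((G.restrictTo B).deleteEdges {s(x, y)}) := by
  rw [disjoint_iff_inf_le]
  rintro u v ⟨h₁, h₂⟩
  simp only [deleteEdges_adj, restrictTo, Set.mem_singleton_iff] at h₁ h₂
  obtain ⟨⟨huv, huA, hvA⟩, hne⟩ := h₁
  obtain ⟨⟨-, huB, hvB⟩, -⟩ := h₂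
  have hu : u ∈ s(x, y) := Sym2.mem_iff.2 (h ⟨huA, huB⟩)
  have hv : v ∈ s(x, y) := Sym2.mem_iff.2 (h ⟨hvA, hvB⟩)
  exact hne ((Sym2.mem_and_mem_iff huv.ne).1 ⟨hu, hv⟩).symm

end SimpleGraph

theorem graphPoly_mul_of_cut_general {V : Type*} [Fintype V] [LinearOrder V]
    (G : SimpleGraph V) (x y : V) (A B : Set V)
    (hInter : A ∩ B = {x, y})
    (hEdges : ∀ u v, G.Adj u v → (u ∈ A ∧ v ∈ A) ∨ (u ∈ B ∧ v ∈ B)) :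
    graphPoly (G.deleteEdges {s(x, y)}) =
      graphPoly ((G.restrictTo A).deleteEdges {s(x, y)}) *
        graphPoly ((G.restrictTo B).deleteEdges {s(x, y)}) := by
  rw [← graphPoly_sup (G.disjoint_restrictTo_deleteEdges hInter.subset),
    ← SimpleGraph.deleteEdges_sup, G.restrictTo_sup_restrictTo hEdges]

/-- The graph polynomial is multiplicative over edge cuts meeting in at most two specified
vertices: if `e' = xy` is an edge and `G₁ = G[A]`, `G₂ = G[B]` are induced subgraphs with
`A ∪ B = V`, `A ∩ B = {x, y}` and every edge of `G` lies in `G₁` or `G₂`, then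
`P_{G - e'} = P_{G₁ - e'} · P_{G₂ - e'}`. -/
theorem graphPoly_mul_of_cut {V : Type*} [Fintype V] [LinearOrder V]
    (G : SimpleGraph V) (x y : V) (hxy : G.Adj x y) (A B : Set V)
    (hUnion : A ∪ B = Set.univ) (hInter : A ∩ B = {x, y})
    (hEdges : ∀ u v, G.Adj u v → (u ∈ A ∧ v ∈ A) ∨ (u ∈ B ∧ v ∈ B)) :
    graphPoly (G.deleteEdges {s(x, y)}) =
      graphPoly ((G.restrictTo A).deleteEdges {s(x, y)}) *
        graphPoly ((G.restrictTo B).deleteEdges {s(x, y)}) :=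
  graphPoly_mul_of_cut_general G x y A B hInter hEdges
end

section
/- If G is a graph, e = v₁v₂ an edge, and η is an index function of G − e with c_{G−e, η} ≠ 0 and η(x_{v₂}) = 0, then setting η'(x_{v₁}) = η(x_{v₁}) + 1 and η' = η elsewhere gives c_{G, η'} = c_{G−e, η} ≠ 0. -/
open MvPolynomial

/-- If `e = v₁v₂` is an edge of `G`, the vertex ordering is chosen so that
`P_G = (x_{v₁} - x_{v₂})·P_{G-e}`, and `η` is an index function of `G - e` with
`c_{G-e,η} ≠ 0` and `η(x_{v₂}) = 0`, then raising `η` by one at `v₁` gives an index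
function `η'` with `c_{G,η'} = c_{G-e,η} ≠ 0`. -/
theorem coeff_add_single_of_edge {V : Type*} [Fintype V] [LinearOrder V]
    (G : SimpleGraph V) (v₁ v₂ : V) (he : G.Adj v₁ v₂)
    (hP : graphPoly G = (X v₁ - X v₂) * graphPoly (G.deleteEdges {s(v₁, v₂)}))
    (η : V →₀ ℕ)
    (hc : MvPolynomial.coeff η (graphPoly (G.deleteEdges {s(v₁, v₂)})) ≠ 0)
    (h2 : η v₂ = 0) :
    MvPolynomial.coeff (η + Finsupp.single v₁ 1) (graphPoly G) =
        MvPolynomial.coeff η (graphPoly (G.deleteEdges {s(v₁, v₂)})) ∧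
      MvPolynomial.coeff (η + Finsupp.single v₁ 1) (graphPoly G) ≠ 0 := by
  classical
  have hne : v₁ ≠ v₂ := G.ne_of_adj he
  have key : MvPolynomial.coeff (η + Finsupp.single v₁ 1) (graphPoly G) =
      MvPolynomial.coeff η (graphPoly (G.deleteEdges {s(v₁, v₂)})) := by
    rw [hP, sub_mul, coeff_sub]
    rw [add_comm η (Finsupp.single v₁ 1), coeff_X_mul]
    rw [coeff_X_mul']
    have h2' : v₂ ∉ (Finsupp.single v₁ 1 + η).support := by
      simp [Finsupp.mem_support_iff, Finsupp.single_apply, hne, h2]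
    rw [if_neg h2', sub_zero]
  exact ⟨key, key ▸ hc⟩
end

section
/- Let D = D₁ ∪ D₂ be an orientation of a graph that is the edge-disjoint union of digraphs D₁ and D₂ sharing only vertices x and y, and suppose no edge of D₂ incident to x or y lies on a directed cycle of D. Then |EE(D)| − |OE(D)| = (|EE(D₁)| − |OE(D₁)|)·(|EE(D₂)| − |OE(D₂)|). -/
variable {V : Type*} [Fintype V] [DecidableEq V]

/-- Out-degree of `v` in the digraph with arc set `A`. -/
def outDeg (A : Finset (V × V)) (v : V) : ℕ := (A.filter (fun p => p.1 = v)).card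

/-- In-degree of `v` in the digraph with arc set `A`. -/
def inDeg (A : Finset (V × V)) (v : V) : ℕ := (A.filter (fun p => p.2 = v)).card

/-- A digraph is Eulerian if every vertex has equal in- and out-degree. -/
def IsEulerian (A : Finset (V × V)) : Prop := ∀ v, outDeg A v = inDeg A v

open scoped Classical in
/-- The spanning Eulerian sub-digraphs of `A` with an even number of edges. -/
noncomputable def EE (A : Finset (V × V)) : Finset (Finset (V × V)) :=
  A.powerset.filter (fun B => IsEulerian B ∧ Even B.card)

open scoped Classical in
/-- The spanning Eulerian sub-digraphs of `A` with an odd number of edges. -/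
noncomputable def OE (A : Finset (V × V)) : Finset (Finset (V × V)) :=
  A.powerset.filter (fun B => IsEulerian B ∧ Odd B.card)

/-- `A` is an orientation of the graph `G`: every arc is an edge of `G`, and each edge of `G`
receives exactly one of its two possible directions. -/
def IsOrientation (G : SimpleGraph V) (A : Finset (V × V)) : Prop :=
  (∀ p ∈ A, G.Adj p.1 p.2) ∧ ∀ u v, G.Adj u v → ((u, v) ∈ A ↔ (v, u) ∉ A)

/-- The arc `a` lies on a directed cycle of the digraph `A` (a closed directed walk with
distinct vertices). -/
def OnDirectedCycle (A : Finset (V × V)) (a : V × V) : Prop :=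
  ∃ (n : ℕ) (f : Fin (n + 2) → V), Function.Injective f ∧
    (∀ i, (f i, f (i + 1)) ∈ A) ∧ ∃ i, (f i, f (i + 1)) = a

/-- The arc set of a directed cycle (a closed directed walk with distinct vertices). -/
def IsDirectedCycle (C : Finset (V × V)) : Prop :=
  ∃ (n : ℕ) (f : Fin (n + 2) → V), Function.Injective f ∧
    C = Finset.image (fun i => (f i, f (i + 1))) Finset.univ

/-- The reversal of a digraph: every arc reversed. -/
def reverseArcs (C : Finset (V × V)) : Finset (V × V) := C.image (fun p => (p.2, p.1))

/-- The symmetric difference of two (edge-disjoint) digraphs: their union with all digons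
(pairs of oppositely-oriented arcs) deleted. -/
def symmDiffArcs (H₁ H₂ : Finset (V × V)) : Finset (V × V) :=
  (H₁ ∪ H₂).filter (fun p => (p.2, p.1) ∉ H₁ ∪ H₂)

set_option linter.unusedSectionVars false
open scoped Classical

lemma outDeg_union (B₁ B₂ : Finset (V × V)) (h : Disjoint B₁ B₂) (v : V) :
    outDeg (B₁ ∪ B₂) v = outDeg B₁ v + outDeg B₂ v := by
  unfold outDeg
  rw [Finset.filter_union, Finset.card_union_of_disjoint (Finset.disjoint_filter_filter h)]

lemma inDeg_union (B₁ B₂ : Finset (V × V)) (h : Disjoint B₁ B₂) (v : V) :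
    inDeg (B₁ ∪ B₂) v = inDeg B₁ v + inDeg B₂ v := by
  unfold inDeg
  rw [Finset.filter_union, Finset.card_union_of_disjoint (Finset.disjoint_filter_filter h)]

lemma card_filter_fst_mem (B : Finset (V × V)) (S : Finset V) :
    (B.filter (fun p => p.1 ∈ S)).card = ∑ v ∈ S, outDeg B v := by
  rw [show B.filter (fun p => p.1 ∈ S) = S.biUnion (fun v => B.filter (fun p => p.1 = v)) by
    ext p
    simp only [Finset.mem_filter, Finset.mem_biUnion]
    constructor
    · rintro ⟨hp, hs⟩; exact ⟨p.1, hs, hp, rfl⟩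
    · rintro ⟨v, hv, hp, rfl⟩; exact ⟨hp, hv⟩]
  exact Finset.card_biUnion (by
    intro a ha b hb hab
    simp only [Finset.disjoint_left, Finset.mem_filter]
    rintro p ⟨_, rfl⟩ ⟨_, h⟩
    exact hab h)

lemma card_filter_snd_mem (B : Finset (V × V)) (S : Finset V) :
    (B.filter (fun p => p.2 ∈ S)).card = ∑ v ∈ S, inDeg B v := by
  rw [show B.filter (fun p => p.2 ∈ S) = S.biUnion (fun v => B.filter (fun p => p.2 = v)) by
    ext p
    simp only [Finset.mem_filter, Finset.mem_biUnion]
    constructor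
    · rintro ⟨hp, hs⟩; exact ⟨p.2, hs, hp, rfl⟩
    · rintro ⟨v, hv, hp, rfl⟩; exact ⟨hp, hv⟩]
  exact Finset.card_biUnion (by
    intro a ha b hb hab
    simp only [Finset.disjoint_left, Finset.mem_filter]
    rintro p ⟨_, rfl⟩ ⟨_, h⟩
    exact hab h)

lemma eulerian_reach (B : Finset (V × V)) (hB : IsEulerian B) {u v : V} (h : (u, v) ∈ B) :
    Relation.ReflTransGen (fun p q => (p, q) ∈ B) v u := by
  set r := fun p q : V => (p, q) ∈ B with hr
  set S : Finset V := Finset.univ.filter (Relation.ReflTransGen r v) with hS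
  have hmemS : ∀ w, w ∈ S ↔ Relation.ReflTransGen r v w := by
    intro w; simp [hS]
  have hclosed : ∀ p ∈ B, p.1 ∈ S → p.2 ∈ S := by
    intro p hp h1
    rw [hmemS] at h1 ⊢
    exact h1.tail hp
  have hsub : B.filter (fun p => p.1 ∈ S) ⊆ B.filter (fun p => p.2 ∈ S) := by
    intro p hp
    rw [Finset.mem_filter] at hp ⊢
    exact ⟨hp.1, hclosed p hp.1 hp.2⟩
  have hcard : (B.filter (fun p => p.2 ∈ S)).card ≤ (B.filter (fun p => p.1 ∈ S)).card := by
    rw [card_filter_fst_mem, card_filter_snd_mem]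
    exact le_of_eq (Finset.sum_congr rfl (fun w _ => (hB w).symm))
  have heq := Finset.eq_of_subset_of_card_le hsub hcard
  have hv : v ∈ S := by rw [hmemS]
  have : (u, v) ∈ B.filter (fun p => p.2 ∈ S) := Finset.mem_filter.2 ⟨h, hv⟩
  rw [← heq, Finset.mem_filter] at this
  exact (hmemS u).1 this.2

lemma exists_nat_chain {α : Type*} {r : α → α → Prop} {v u : α}
    (h : Relation.ReflTransGen r v u) :
    ∃ (k : ℕ) (f : ℕ → α), f 0 = v ∧ f k = u ∧ ∀ i < k, r (f i) (f (i + 1)) := by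
  induction h with
  | refl => exact ⟨0, fun _ => v, rfl, rfl, by omega⟩
  | @tail b c _ hbc ih =>
    obtain ⟨k, f, h0, hk, hch⟩ := ih
    refine ⟨k + 1, fun n => if n ≤ k then f n else c, ?_, ?_, ?_⟩
    · simpa using h0
    · simp
    · intro i hi
      by_cases hik : i < k
      · simpa [show i ≤ k by omega, show i + 1 ≤ k by omega] using hch i hik
      · have : i = k := by omega
        subst this
        simpa [hk] using hbc

lemma exists_inj_nat_chain {α : Type*} {r : α → α → Prop} :
    ∀ (k : ℕ) (f : ℕ → α), (∀ i < k, r (f i) (f (i + 1))) →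
    ∃ (k' : ℕ) (g : ℕ → α), g 0 = f 0 ∧ g k' = f k ∧ (∀ i < k', r (g i) (g (i + 1))) ∧
      (∀ i ≤ k', ∀ j ≤ k', g i = g j → i = j) := by
  intro k
  induction k using Nat.strong_induction_on with
  | _ k ih =>
    intro f hch
    by_cases hinj : ∀ i ≤ k, ∀ j ≤ k, f i = f j → i = j
    · exact ⟨k, f, rfl, rfl, hch, hinj⟩
    · push_neg at hinj
      obtain ⟨i₀, hi₀, j₀, hj₀, hfij, hne⟩ := hinj
      set i := min i₀ j₀ with hidef
      set j := max i₀ j₀ with hjdef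
      have hij : i < j := by
        rcases lt_or_gt_of_ne hne with h | h
        · simp [hidef, hjdef, min_eq_left h.le, max_eq_right h.le, h]
        · simp [hidef, hjdef, min_eq_right h.le, max_eq_left h.le, h]
      have hjk : j ≤ k := by omega
      have hfij' : f i = f j := by
        rcases le_total i₀ j₀ with h | h
        · simp [hidef, hjdef, min_eq_left h, max_eq_right h, hfij]
        · simp [hidef, hjdef, min_eq_right h, max_eq_left h, hfij]
      set d := j - i with hd
      set k' := k - d with hk'
      have hdpos : 0 < d := by omega
      have hk'lt : k' < k := by omega
      set g : ℕ → α := fun n => if n ≤ i then f n else f (n + d) with hg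
      have hg0 : g 0 = f 0 := by
        show (if 0 ≤ i then f 0 else f (0 + d)) = f 0
        rw [if_pos (Nat.zero_le i)]
      have hgk' : g k' = f k := by
        show (if k' ≤ i then f k' else f (k' + d)) = f k
        by_cases hcase : j = k
        · have h1 : k' = i := by omega
          rw [if_pos (le_of_eq h1), h1, hfij', hcase]
        · have h2 : ¬ k' ≤ i := by omega
          rw [if_neg h2, show k' + d = k by omega]
      have hgch : ∀ n < k', r (g n) (g (n + 1)) := by
        intro n hn
        show r (if n ≤ i then f n else f (n + d)) (if n + 1 ≤ i then f (n + 1) else f (n + 1 + d))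
        rcases lt_trichotomy n i with h | h | h
        · rw [if_pos (by omega), if_pos (by omega)]
          exact hch n (by omega)
        · rw [if_pos (by omega), if_neg (by omega), h, hfij', show i + 1 + d = j + 1 by omega]
          exact hch j (by omega)
        · rw [if_neg (by omega), if_neg (by omega), show n + 1 + d = n + d + 1 by omega]
          exact hch (n + d) (by omega)
      obtain ⟨k'', g', h0', hk'', hch', hinj'⟩ := ih k' hk'lt g hgch
      exact ⟨k'', g', by rw [h0', hg0], by rw [hk'', hgk'], hch', hinj'⟩


lemma onDirectedCycle_of_mem_eulerian (B : Finset (V × V)) (hB : IsEulerian B)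
    {a : V × V} (ha : a ∈ B) (hne : a.1 ≠ a.2) : OnDirectedCycle B a := by
  have hreach := eulerian_reach B hB (show (a.1, a.2) ∈ B by rwa [Prod.mk.eta])
  obtain ⟨k, f, h0, hk, hch⟩ := exists_nat_chain hreach
  obtain ⟨k', g, hg0, hgk, hgch, hginj⟩ := exists_inj_nat_chain (r := fun p q => (p, q) ∈ B) k f hch
  rw [h0] at hg0
  rw [hk] at hgk
  obtain ⟨n, rfl⟩ : ∃ n, k' = n + 1 := by
    refine ⟨k' - 1, ?_⟩
    rcases Nat.eq_zero_or_pos k' with h | h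
    · exfalso; apply hne; rw [← hgk, h, hg0]
    · omega
  refine ⟨n, fun t => g t.val, ?_, ?_, ⟨Fin.last (n + 1), ?_⟩⟩
  · intro s t hst
    exact Fin.ext (hginj s.val (Nat.lt_succ_iff.mp s.isLt) t.val (Nat.lt_succ_iff.mp t.isLt) hst)
  · intro i
    by_cases hi : i = Fin.last (n + 1)
    · subst hi
      rw [Fin.last_add_one]
      show (g (Fin.last (n + 1)).val, g (0 : Fin (n + 2)).val) ∈ B
      rw [Fin.val_last, Fin.val_zero, hgk, hg0, Prod.mk.eta]
      exact ha
    · show (g i.val, g (i + 1).val) ∈ B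
      rw [Fin.val_add_one_of_lt (Fin.lt_last_iff_ne_last.mpr hi)]
      exact hgch i.val (by simpa [Fin.lt_iff_val_lt_val] using Fin.lt_last_iff_ne_last.mpr hi)
  · show (g (Fin.last (n + 1)).val, g (Fin.last (n + 1) + 1).val) = a
    rw [Fin.last_add_one]
    show (g (Fin.last (n + 1)).val, g (0 : Fin (n + 2)).val) = a
    rw [Fin.val_last, Fin.val_zero, hgk, hg0, Prod.mk.eta]




noncomputable def Zsum (A : Finset (V × V)) : ℤ :=
  ∑ B ∈ A.powerset.filter (fun B => IsEulerian B), (-1 : ℤ) ^ B.card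

lemma EE_sub_OE (A : Finset (V × V)) :
    ((EE A).card : ℤ) - (OE A).card = Zsum A := by
  have h1 : EE A = (A.powerset.filter (fun B => IsEulerian B)).filter
      (fun B => Even B.card) := by
    ext B; simp [EE, Finset.mem_filter, and_assoc]
  have h2 : OE A = (A.powerset.filter (fun B => IsEulerian B)).filter
      (fun B => ¬ Even B.card) := by
    ext B; simp [OE, Finset.mem_filter, and_assoc, ← Nat.not_even_iff_odd]
  rw [Zsum, ← Finset.sum_filter_add_sum_filter_not (A.powerset.filter (fun B => IsEulerian B))
    (fun B => Even B.card), h1, h2]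
  rw [Finset.sum_congr rfl (fun B hB => (Finset.mem_filter.mp hB).2.neg_one_pow),
    Finset.sum_congr rfl (fun B hB =>
      (Nat.not_even_iff_odd.mp (Finset.mem_filter.mp hB).2).neg_one_pow)]
  simp [mul_comm]
  ring

lemma isEulerian_union {B₁ B₂ : Finset (V × V)} (hd : Disjoint B₁ B₂)
    (h₁ : IsEulerian B₁) (h₂ : IsEulerian B₂) : IsEulerian (B₁ ∪ B₂) := by
  intro v; rw [outDeg_union _ _ hd, inDeg_union _ _ hd, h₁ v, h₂ v]

lemma onDirectedCycle_mono {A A' : Finset (V × V)} {a : V × V}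
    (h : OnDirectedCycle A a) (hs : A ⊆ A') : OnDirectedCycle A' a := by
  obtain ⟨n, f, hinj, hmem, hex⟩ := h
  exact ⟨n, f, hinj, fun i => hs (hmem i), hex⟩

lemma deg_zero_of_no_inc {C : Finset (V × V)} {v : V} (h : ∀ p ∈ C, p.1 ≠ v ∧ p.2 ≠ v) :
    outDeg C v = 0 ∧ inDeg C v = 0 := by
  constructor
  · rw [outDeg, Finset.card_eq_zero, Finset.filter_eq_empty_iff]
    exact fun p hp => (h p hp).1
  · rw [inDeg, Finset.card_eq_zero, Finset.filter_eq_empty_iff]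
    exact fun p hp => (h p hp).2

lemma split_eulerian (D₁ D₂ : Finset (V × V)) (x y : V)
    (hloop : ∀ p ∈ D₁ ∪ D₂, p.1 ≠ p.2)
    (hd : Disjoint D₁ D₂)
    (hshare : ∀ p ∈ D₁, ∀ q ∈ D₂, ∀ v : V,
      (v = p.1 ∨ v = p.2) → (v = q.1 ∨ v = q.2) → v = x ∨ v = y)
    (hnc : ∀ q ∈ D₂, (q.1 = x ∨ q.1 = y ∨ q.2 = x ∨ q.2 = y) →
      ¬ OnDirectedCycle (D₁ ∪ D₂) q)
    {B : Finset (V × V)} (hsub : B ⊆ D₁ ∪ D₂) (hB : IsEulerian B) :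
    IsEulerian (B ∩ D₁) ∧ IsEulerian (B ∩ D₂) := by
  have hclaim : ∀ q ∈ B ∩ D₂, ¬(q.1 = x ∨ q.1 = y ∨ q.2 = x ∨ q.2 = y) := by
    intro q hq hxy
    obtain ⟨hqB, hqD₂⟩ := Finset.mem_inter.mp hq
    have hcyc := onDirectedCycle_of_mem_eulerian B hB hqB (hloop q (hsub hqB))
    exact hnc q hqD₂ hxy (onDirectedCycle_mono hcyc hsub)
  have hBdec : B ∩ D₁ ∪ B ∩ D₂ = B := by
    rw [← Finset.inter_union_distrib_left]
    exact Finset.inter_eq_left.mpr hsub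
  have hdis : Disjoint (B ∩ D₁) (B ∩ D₂) :=
    hd.mono Finset.inter_subset_right Finset.inter_subset_right
  have key : ∀ v, (outDeg (B ∩ D₁) v = inDeg (B ∩ D₁) v) ∧
      (outDeg (B ∩ D₂) v = inDeg (B ∩ D₂) v) := by
    intro v
    have hout := outDeg_union (B ∩ D₁) (B ∩ D₂) hdis v
    have hin := inDeg_union (B ∩ D₁) (B ∩ D₂) hdis v
    rw [hBdec] at hout hin
    by_cases hcase : ∃ q ∈ B ∩ D₂, q.1 = v ∨ q.2 = v
    · obtain ⟨q, hq, hqv⟩ := hcase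
      have hvxy : v ≠ x ∧ v ≠ y := by
        constructor <;> rintro rfl <;> apply hclaim q hq <;> tauto
      have hno1 : ∀ p ∈ B ∩ D₁, p.1 ≠ v ∧ p.2 ≠ v := by
        intro p hp
        have hshare' : (v = p.1 ∨ v = p.2) → v = x ∨ v = y := by
          intro h
          refine hshare p (Finset.mem_inter.mp hp).2 q (Finset.mem_inter.mp hq).2 v h ?_
          rcases hqv with h' | h'
          exacts [Or.inl h'.symm, Or.inr h'.symm]
        constructor <;> intro hpv
        · rcases hshare' (Or.inl hpv.symm) with h | h
          exacts [hvxy.1 h, hvxy.2 h]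
        · rcases hshare' (Or.inr hpv.symm) with h | h
          exacts [hvxy.1 h, hvxy.2 h]
      obtain ⟨ho, hi⟩ := deg_zero_of_no_inc hno1
      constructor
      · rw [ho, hi]
      · rw [ho] at hout
        rw [hi] at hin
        have := hB v
        omega
    · push_neg at hcase
      have hno2 : ∀ p ∈ B ∩ D₂, p.1 ≠ v ∧ p.2 ≠ v := by
        intro p hp
        have := hcase p hp
        tauto
      obtain ⟨ho, hi⟩ := deg_zero_of_no_inc hno2
      constructor
      · rw [ho] at hout
        rw [hi] at hin
        have := hB v
        omega
      · rw [ho, hi]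
  exact ⟨fun v => (key v).1, fun v => (key v).2⟩
/-- If `D = D₁ ∪ D₂` is a loopless edge-disjoint union of digraphs sharing only the vertices
`x` and `y`, and no arc of `D₂` incident to `x` or `y` lies on a directed cycle of `D`, then
`|EE(D)| - |OE(D)| = (|EE(D₁)| - |OE(D₁)|)·(|EE(D₂)| - |OE(D₂)|)`. -/
theorem EE_sub_OE_mul (D₁ D₂ : Finset (V × V)) (x y : V)
    (hloop : ∀ p ∈ D₁ ∪ D₂, p.1 ≠ p.2)
    (hd : Disjoint D₁ D₂)
    (hshare : ∀ p ∈ D₁, ∀ q ∈ D₂, ∀ v : V,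
      (v = p.1 ∨ v = p.2) → (v = q.1 ∨ v = q.2) → v = x ∨ v = y)
    (hnc : ∀ q ∈ D₂, (q.1 = x ∨ q.1 = y ∨ q.2 = x ∨ q.2 = y) →
      ¬ OnDirectedCycle (D₁ ∪ D₂) q) :
    ((EE (D₁ ∪ D₂)).card : ℤ) - (OE (D₁ ∪ D₂)).card =
      (((EE D₁).card : ℤ) - (OE D₁).card) * (((EE D₂).card : ℤ) - (OE D₂).card) := by
  rw [EE_sub_OE, EE_sub_OE, EE_sub_OE, Zsum, Zsum, Zsum, Finset.sum_mul_sum,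
    ← Finset.sum_product']
  refine Finset.sum_nbij' (fun B => (B ∩ D₁, B ∩ D₂)) (fun q => q.1 ∪ q.2) ?_ ?_ ?_ ?_ ?_
  · intro B hB
    rw [Finset.mem_filter, Finset.mem_powerset] at hB
    obtain ⟨h1, h2⟩ := split_eulerian D₁ D₂ x y hloop hd hshare hnc hB.1 hB.2
    rw [Finset.mem_product, Finset.mem_filter, Finset.mem_filter,
      Finset.mem_powerset, Finset.mem_powerset]
    exact ⟨⟨Finset.inter_subset_right, h1⟩, ⟨Finset.inter_subset_right, h2⟩⟩
  · rintro ⟨B₁, B₂⟩ hB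
    rw [Finset.mem_product, Finset.mem_filter, Finset.mem_filter,
      Finset.mem_powerset, Finset.mem_powerset] at hB
    rw [Finset.mem_filter, Finset.mem_powerset]
    refine ⟨Finset.union_subset_union hB.1.1 hB.2.1, ?_⟩
    exact isEulerian_union (hd.mono hB.1.1 hB.2.1) hB.1.2 hB.2.2
  · intro B hB
    rw [Finset.mem_filter, Finset.mem_powerset] at hB
    show B ∩ D₁ ∪ B ∩ D₂ = B
    rw [← Finset.inter_union_distrib_left]
    exact Finset.inter_eq_left.mpr hB.1
  · rintro ⟨B₁, B₂⟩ hB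
    rw [Finset.mem_product, Finset.mem_filter, Finset.mem_filter,
      Finset.mem_powerset, Finset.mem_powerset] at hB
    obtain ⟨⟨hs1, -⟩, hs2, -⟩ := hB
    have hs1 : B₁ ⊆ D₁ := hs1
    have hs2 : B₂ ⊆ D₂ := hs2
    have e1 : (B₁ ∪ B₂) ∩ D₁ = B₁ := by
      rw [Finset.union_inter_distrib_right, Finset.inter_eq_left.mpr hs1,
        Finset.disjoint_iff_inter_eq_empty.mp (Finset.disjoint_of_subset_left hs2 hd.symm),
        Finset.union_empty]
    have e2 : (B₁ ∪ B₂) ∩ D₂ = B₂ := by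
      rw [Finset.union_inter_distrib_right, Finset.inter_eq_left.mpr hs2,
        Finset.disjoint_iff_inter_eq_empty.mp (Finset.disjoint_of_subset_left hs1 hd),
        Finset.empty_union]
    show ((B₁ ∪ B₂) ∩ D₁, (B₁ ∪ B₂) ∩ D₂) = (B₁, B₂)
    rw [e1, e2]
  · intro B hB
    rw [Finset.mem_filter, Finset.mem_powerset] at hB
    have hdec : B ∩ D₁ ∪ B ∩ D₂ = B := by
      rw [← Finset.inter_union_distrib_left]
      exact Finset.inter_eq_left.mpr hB.1
    have hdis : Disjoint (B ∩ D₁) (B ∩ D₂) :=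
      hd.mono Finset.inter_subset_right Finset.inter_subset_right
    have hcard : (B ∩ D₁).card + (B ∩ D₂).card = B.card := by
      rw [← Finset.card_union_of_disjoint hdis, hdec]
    show (-1 : ℤ) ^ B.card = (-1 : ℤ) ^ (B ∩ D₁).card * (-1 : ℤ) ^ (B ∩ D₂).card
    rw [← pow_add, hcard]
end
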